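/- arXiv:2004.12740 — 9 statements merged into one kernel-verified Lean document; each statement's English description precedes it below -/
import Mathlib

section
/- Every normed star expression (one from which √ is reachable by a sequence of transitions) admits a path of transitions to √ in which every transition is a body transition with respect to the entry/body labeling defined by the labeled transition system. -/
/-- Star expressions over an alphabet `A` (without the constant 1, with binary Kleene star). -/
inductive StarExp (A : Type) : Type
  | zero : StarExp A
  | act : A → StarExp A
  | sum : StarExp A → StarExp A → StarExp A
  | prod : StarExp A → StarExp A → StarExp A
  | star : StarExp A → StarExp A → StarExp A

namespace StarExp

/-- The star height of a star expression. -/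
def height {A : Type} : StarExp A → ℕ
  | zero => 0
  | act _ => 0
  | sum e1 e2 => max e1.height e2.height
  | prod e1 e2 => max e1.height e2.height
  | star e1 e2 => max (e1.height + 1) e2.height

end StarExp
/-- The transition system of the process semantics: `Step e a ξ` means `e —a→ ξ`,
where `ξ` is either a star expression (`some e'`) or the termination symbol √ (`none`). -/
inductive Step {A : Type} : StarExp A → A → Option (StarExp A) → Prop
  | act (a : A) : Step (.act a) a none
  | sum_left {e1 : StarExp A} {a : A} {ξ : Option (StarExp A)} (e2 : StarExp A) :
      Step e1 a ξ → Step (.sum e1 e2) a ξ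
  | sum_right {e2 : StarExp A} {a : A} {ξ : Option (StarExp A)} (e1 : StarExp A) :
      Step e2 a ξ → Step (.sum e1 e2) a ξ
  | prod_left {e1 e1' : StarExp A} {a : A} (e2 : StarExp A) :
      Step e1 a (some e1') → Step (.prod e1 e2) a (some (.prod e1' e2))
  | prod_tick {e1 : StarExp A} {a : A} (e2 : StarExp A) :
      Step e1 a none → Step (.prod e1 e2) a (some e2)
  | star_left {e1 e1' : StarExp A} {a : A} (e2 : StarExp A) :
      Step e1 a (some e1') → Step (.star e1 e2) a (some (.prod e1' (.star e1 e2)))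
  | star_tick {e1 : StarExp A} {a : A} (e2 : StarExp A) :
      Step e1 a none → Step (.star e1 e2) a (some (.star e1 e2))
  | star_right {e2 : StarExp A} {a : A} {ξ : Option (StarExp A)} (e1 : StarExp A) :
      Step e2 a ξ → Step (.star e1 e2) a ξ

/-- A star expression is normed if the termination symbol √ is reachable from it
by a finite sequence of transitions. -/
inductive Normed {A : Type} : StarExp A → Prop
  | done {e : StarExp A} {a : A} : Step e a none → Normed e
  | step {e e' : StarExp A} {a : A} : Step e a (some e') → Normed e' → Normed e

/-- Marking labels for the entry/body labeling: `bo` marks body transitions,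
`en n` marks loop-entry transitions of level `n`. -/
inductive TLabel : Type
  | bo : TLabel
  | en : ℕ → TLabel

/-- The entry/body-labeled transition system of the process semantics. -/
inductive LStep {A : Type} : StarExp A → A → TLabel → Option (StarExp A) → Prop
  | act (a : A) : LStep (.act a) a .bo none
  | sum_left {e1 : StarExp A} {a : A} {l : TLabel} {ξ : Option (StarExp A)} (e2 : StarExp A) :
      LStep e1 a l ξ → LStep (.sum e1 e2) a .bo ξ
  | sum_right {e2 : StarExp A} {a : A} {l : TLabel} {ξ : Option (StarExp A)} (e1 : StarExp A) :
      LStep e2 a l ξ → LStep (.sum e1 e2) a .bo ξ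
  | prod_left {e1 e1' : StarExp A} {a : A} {l : TLabel} (e2 : StarExp A) :
      LStep e1 a l (some e1') → LStep (.prod e1 e2) a l (some (.prod e1' e2))
  | prod_tick {e1 : StarExp A} {a : A} (e2 : StarExp A) :
      LStep e1 a .bo none → LStep (.prod e1 e2) a .bo (some e2)
  | star_entry {e1 e1' : StarExp A} {a : A} {l : TLabel} (e2 : StarExp A) :
      LStep e1 a l (some e1') → Normed e1 →
      LStep (.star e1 e2) a (.en (e1.height + 1)) (some (.prod e1' (.star e1 e2)))
  | star_body {e1 e1' : StarExp A} {a : A} {l : TLabel} (e2 : StarExp A) :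
      LStep e1 a l (some e1') → ¬ Normed e1 →
      LStep (.star e1 e2) a .bo (some (.prod e1' (.star e1 e2)))
  | star_tick {e1 : StarExp A} {a : A} (e2 : StarExp A) :
      LStep e1 a .bo none → LStep (.star e1 e2) a (.en (e1.height + 1)) (some (.star e1 e2))
  | star_exit {e2 : StarExp A} {a : A} {l : TLabel} {ξ : Option (StarExp A)} (e1 : StarExp A) :
      LStep e2 a l ξ → LStep (.star e1 e2) a .bo ξ

/-- √ is reachable by a path consisting solely of body transitions. -/
inductive BodyNormed {A : Type} : StarExp A → Prop
  | done {e : StarExp A} {a : A} : LStep e a .bo none → BodyNormed e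
  | step {e e' : StarExp A} {a : A} : LStep e a .bo (some e') → BodyNormed e' → BodyNormed e


/-- Structural characterization of normedness. -/
def NormedS {A : Type} : StarExp A → Prop
  | .zero => False
  | .act _ => True
  | .sum e1 e2 => NormedS e1 ∨ NormedS e2
  | .prod e1 e2 => NormedS e1 ∧ NormedS e2
  | .star _ e2 => NormedS e2

theorem step_normedS {A : Type} {e : StarExp A} {a : A} {ξ : Option (StarExp A)}
    (h : Step e a ξ) (hξ : ∀ e', ξ = some e' → NormedS e') : NormedS e := by
  induction h with
  | act => trivial
  | sum_left e2 _ ih => exact Or.inl (ih hξ)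
  | sum_right e1 _ ih => exact Or.inr (ih hξ)
  | prod_left e2 _ ih =>
      have := hξ _ rfl
      exact ⟨ih (fun e' he => by cases he; exact this.1), this.2⟩
  | prod_tick e2 _ ih =>
      exact ⟨ih (fun e' he => by cases he), hξ _ rfl⟩
  | star_left e2 _ _ => exact (hξ _ rfl).2
  | star_tick e2 _ _ => exact hξ _ rfl
  | star_right e1 _ ih => exact ih hξ

theorem normed_normedS {A : Type} {e : StarExp A} (h : Normed e) : NormedS e := by
  induction h with
  | done hs => exact step_normedS hs (fun e' he => by cases he)
  | step hs _ ih => exact step_normedS hs (fun e' he => by cases he; exact ih)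

theorem bodyNormed_sum_left {A : Type} {e1 : StarExp A} (e2 : StarExp A)
    (h : BodyNormed e1) : BodyNormed (.sum e1 e2) := by
  cases h with
  | done hs => exact .done (.sum_left e2 hs)
  | step hs rest => exact .step (.sum_left e2 hs) rest

theorem bodyNormed_sum_right {A : Type} {e2 : StarExp A} (e1 : StarExp A)
    (h : BodyNormed e2) : BodyNormed (.sum e1 e2) := by
  cases h with
  | done hs => exact .done (.sum_right e1 hs)
  | step hs rest => exact .step (.sum_right e1 hs) rest

theorem bodyNormed_prod {A : Type} {e1 e2 : StarExp A}
    (h1 : BodyNormed e1) (h2 : BodyNormed e2) : BodyNormed (.prod e1 e2) := by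
  induction h1 with
  | done hs => exact .step (.prod_tick e2 hs) h2
  | step hs _ ih => exact .step (.prod_left e2 hs) ih

theorem bodyNormed_star {A : Type} {e2 : StarExp A} (e1 : StarExp A)
    (h : BodyNormed e2) : BodyNormed (.star e1 e2) := by
  cases h with
  | done hs => exact .done (.star_exit e1 hs)
  | step hs rest => exact .step (.star_exit e1 hs) rest

theorem normedS_bodyNormed {A : Type} (e : StarExp A) (h : NormedS e) : BodyNormed e := by
  induction e with
  | zero => exact absurd h id
  | act a => exact .done (.act a)
  | sum e1 e2 ih1 ih2 =>
      rcases h with h | h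
      · exact bodyNormed_sum_left e2 (ih1 h)
      · exact bodyNormed_sum_right e1 (ih2 h)
  | prod e1 e2 ih1 ih2 => exact bodyNormed_prod (ih1 h.1) (ih2 h.2)
  | star e1 e2 _ ih2 => exact bodyNormed_star e1 (ih2 h)

/-- Every normed star expression admits a path of transitions to √ in which every
transition is a body transition of the entry/body labeling. -/
theorem normed_bodyNormed {A : Type} (e : StarExp A) (h : Normed e) : BodyNormed e :=
  normedS_bodyNormed e (normed_normedS h)
end

section
/- In an entry/body-labeled finite chart that is a LLEE-witness, there is no infinite path consisting solely of body transitions; in particular there is no cycle of body transitions. -/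
/-- An entry/body-labeled finite chart: a rooted labelled transition system with
termination sink `tick` (√), start vertex `start`, and transitions carrying an
action from `A` together with a marking label in ℕ (label `0` marks body
transitions, positive labels mark entry transitions).  Every vertex other than
possibly `tick` is reachable from the start vertex. -/
structure LChart (V : Type) (A : Type) : Type where
  tick : V
  start : V
  Tr : V → A → ℕ → V → Prop
  tick_no_out : ∀ (a : A) (n : ℕ) (w : V), ¬ Tr tick a n w
  start_ne_tick : start ≠ tick
  connected : ∀ v : V, v = tick ∨
    Relation.ReflTransGen (fun x y => ∃ (a : A) (n : ℕ), Tr x a n y) start v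

namespace LChart

variable {V A : Type}

/-- Body transition step (marking label `0`). -/
def BStep (C : LChart V A) (x y : V) : Prop := ∃ a : A, C.Tr x a 0 y

/-- Entry transition step of level `α > 0`. -/
def EStep (C : LChart V A) (α : ℕ) (x y : V) : Prop := 0 < α ∧ ∃ a : A, C.Tr x a α y

/-- A transition step of any kind. -/
def AnyStep (C : LChart V A) (x y : V) : Prop := ∃ (a : A) (n : ℕ), C.Tr x a n y

/-- There is an entry transition of level `α` departing from `v`. -/
def HasEntry (C : LChart V A) (v : V) (α : ℕ) : Prop :=
  0 < α ∧ ∃ (a : A) (w : V), C.Tr v a α w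

/-- `v` descends in a loop of level `α` to `w`: there is a path from `v` to `w`
starting with an `α`-entry transition and continuing with body transitions, in
which all transition targets avoid `v`. -/
def Descends (C : LChart V A) (v : V) (α : ℕ) (w : V) : Prop :=
  ∃ u : V, C.EStep α v u ∧ u ≠ v ∧
    Relation.ReflTransGen (fun x y => C.BStep x y ∧ y ≠ v) u w

/-- `v` descends in a loop to `w` (at some level). -/
def Desc (C : LChart V A) (v w : V) : Prop := ∃ α : ℕ, C.Descends v α w

/-- An infinite path from `v` in the loop subchart `C[v,α]`: it starts at `v`,
takes an `α`-entry transition whenever it is at `v`, and body transitions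
otherwise. -/
def LoopSeq (C : LChart V A) (v : V) (α : ℕ) (f : ℕ → V) : Prop :=
  f 0 = v ∧ ∀ n : ℕ,
    (f n = v → C.EStep α (f n) (f (n + 1))) ∧ (f n ≠ v → C.BStep (f n) (f (n + 1)))

/-- The conditions (W1), (W2)(a) (the subchart `C[v,α]` is a loop chart, i.e.
(L1) an infinite path from `v` exists, (L2) every infinite path from `v`
returns to `v` after a positive number of steps, (L3) √ is not a vertex of
`C[v,α]`), and (W2)(b) (layeredness) for an entry/body-labeling to be a
LLEE-witness. -/
structure IsLLEE (C : LChart V A) : Prop where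
  w1 : ¬ ∃ f : ℕ → V, f 0 = C.start ∧ ∀ n : ℕ, C.BStep (f n) (f (n + 1))
  w2a_L1 : ∀ (v : V) (α : ℕ), C.HasEntry v α → ∃ f : ℕ → V, C.LoopSeq v α f
  w2a_L2 : ∀ (v : V) (α : ℕ), C.HasEntry v α →
    ∀ f : ℕ → V, C.LoopSeq v α f → ∃ n : ℕ, 0 < n ∧ f n = v
  w2a_L3 : ∀ (v : V) (α : ℕ), ¬ C.Descends v α C.tick
  w2b : ∀ (v w : V) (α : ℕ), C.Descends v α w → ∀ β : ℕ, α ≤ β → ¬ C.HasEntry w β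

/-- `u` and `v` lie in the same strongly connected component. -/
def SameSCC (C : LChart V A) (u v : V) : Prop :=
  Relation.ReflTransGen C.AnyStep u v ∧ Relation.ReflTransGen C.AnyStep v u

/-- `w` loops back to `v`: `v` descends in a loop to `w` and there is a nonempty
path of body transitions from `w` back to `v`. -/
def LoopsBack (C : LChart V A) (w v : V) : Prop :=
  C.Desc v w ∧ Relation.TransGen C.BStep w v

/-- `w` directly loops back to `v`. -/
def DLoopsBack (C : LChart V A) (w v : V) : Prop :=
  C.LoopsBack w v ∧ ∀ u : V, C.LoopsBack w u → u = v ∨ C.LoopsBack v u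

end LChart

/-- Key step lemma: an infinite body path from `v` and any transition `u → v`
yield an infinite body path from `u`. -/
lemma step_back {V A : Type} (C : LChart V A) (h : C.IsLLEE) {u v : V}
    (huv : C.AnyStep u v) (f : ℕ → V) (hf0 : f 0 = v)
    (hf : ∀ n : ℕ, C.BStep (f n) (f (n + 1))) :
    ∃ g : ℕ → V, g 0 = u ∧ ∀ n : ℕ, C.BStep (g n) (g (n + 1)) := by
  obtain ⟨a, n, htr⟩ := huv
  rcases Nat.eq_zero_or_pos n with hn | hn
  · subst hn
    refine ⟨fun k => match k with | 0 => u | k + 1 => f k, rfl, fun k => ?_⟩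
    cases k with
    | zero => show C.BStep u (f 0); rw [hf0]; exact ⟨a, htr⟩
    | succ m => exact hf m
  · by_cases hvis : ∃ k : ℕ, f k = u
    · obtain ⟨k, hk⟩ := hvis
      refine ⟨fun m => f (k + m), ?_, fun m => ?_⟩
      · exact hk
      · exact hf (k + m)
    · push_neg at hvis
      exfalso
      set g : ℕ → V := fun k => match k with | 0 => u | k + 1 => f k with hg
      have hloop : C.LoopSeq u n g := by
        refine ⟨rfl, fun k => ?_⟩
        cases k with
        | zero =>
          refine ⟨fun _ => ⟨hn, a, ?_⟩, fun h0 => absurd rfl h0⟩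
          show C.Tr u a n (f 0)
          rw [hf0]; exact htr
        | succ m =>
          refine ⟨fun heq => absurd heq (hvis m), fun _ => hf m⟩
      have hent : C.HasEntry u n := ⟨hn, a, v, htr⟩
      obtain ⟨m, hm, hmu⟩ := h.w2a_L2 u n hent g hloop
      cases m with
      | zero => exact Nat.lt_irrefl 0 hm
      | succ m' => exact hvis m' hmu

/-- No infinite body path from any vertex reachable from the start. -/
lemma no_body_path_of_reachable {V A : Type} (C : LChart V A) (h : C.IsLLEE) {v : V}
    (hr : Relation.ReflTransGen C.AnyStep C.start v) (f : ℕ → V) (hf0 : f 0 = v)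
    (hf : ∀ n : ℕ, C.BStep (f n) (f (n + 1))) : False := by
  induction hr generalizing f with
  | refl => exact h.w1 ⟨f, hf0, hf⟩
  | tail _ huv ih =>
    obtain ⟨g, hg0, hg⟩ := step_back C h huv f hf0 hf
    exact ih g hg0 hg

lemma inf_of_cycle {V A : Type} (C : LChart V A) {v : V}
    (hcyc : Relation.TransGen C.BStep v v) :
    ∃ f : ℕ → V, f 0 = v ∧ ∀ n : ℕ, C.BStep (f n) (f (n + 1)) := by
  have key : ∀ x : V, Relation.TransGen C.BStep x v →
      ∃ y, C.BStep x y ∧ Relation.TransGen C.BStep y v := by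
    intro x hx
    obtain ⟨c, hxc, hcv⟩ := Relation.TransGen.head'_iff.mp hx
    exact ⟨c, hxc, Relation.TransGen.trans_right hcv hcyc⟩
  choose nxt hstep hnxt using key
  let F : ℕ → {x : V // Relation.TransGen C.BStep x v} := fun n =>
    Nat.rec ⟨v, hcyc⟩ (fun _ p => ⟨nxt p.1 p.2, hnxt p.1 p.2⟩) n
  exact ⟨fun n => (F n).1, rfl, fun n => hstep (F n).1 (F n).2⟩

/-- In a chart with a LLEE-witness there is no infinite path consisting solely of
body transitions; in particular there is no cycle of body transitions. -/
theorem no_infinite_body_path {V A : Type} [Finite V] (C : LChart V A) (h : C.IsLLEE) :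
    (¬ ∃ f : ℕ → V, ∀ n : ℕ, C.BStep (f n) (f (n + 1))) ∧
    (∀ v : V, ¬ Relation.TransGen C.BStep v v) := by
  have part1 : ¬ ∃ f : ℕ → V, ∀ n : ℕ, C.BStep (f n) (f (n + 1)) := by
    rintro ⟨f, hf⟩
    rcases C.connected (f 0) with htick | hr
    · obtain ⟨a, htr⟩ := hf 0
      exact C.tick_no_out a 0 (f 1) (htick ▸ htr)
    · exact no_body_path_of_reachable C h hr f rfl hf
  refine ⟨part1, fun v hcyc => ?_⟩
  obtain ⟨f, _, hf⟩ := inf_of_cycle C hcyc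
  exact part1 ⟨f, hf⟩
end

section
/- In a chart with a LLEE-witness, if there is a path from v starting with an α-level entry transition and then arbitrary transitions, all of whose targets avoid v, ending at w, then there is an acyclic path from v to w of the form v ↓_α · ↓* w (an α-descends step followed by finitely many descends-in-loop-to steps). -/
/-!
Follow the given path while maintaining an acyclic descends path from `v` to the current
vertex. A step back to a vertex already on it cuts the path at that vertex; an entry step
to a fresh vertex appends a new descent; a body step to a fresh vertex prolongs the last
descent, whose source it avoids because the descends path is acyclic.
-/

theorem List.exists_cons_prefix_getLast_eq {α : Type*} {u y : α} {xs : List α}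
    (hy : y ∈ u :: xs) :
    ∃ xs', u :: xs' <+: u :: xs ∧ (u :: xs').getLast (List.cons_ne_nil u xs') = y := by
  induction xs generalizing u with
  | nil => exact ⟨[], List.prefix_refl _, (List.mem_singleton.1 hy).symm⟩
  | cons b t ih =>
    obtain rfl | hy := List.mem_cons.1 hy
    · exact ⟨[], by simp, rfl⟩
    · obtain ⟨xs', hpre, hlast⟩ := ih hy
      exact ⟨b :: xs', (List.prefix_cons_inj u).2 hpre, by simpa using hlast⟩

namespace LChart

variable {V A : Type} {C : LChart V A} {v w x y : V} {α : ℕ}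

theorem Descends.of_eStep (he : C.EStep α v w) (hwv : w ≠ v) : C.Descends v α w :=
  ⟨w, he, hwv, .refl⟩

theorem Descends.ne_source (hd : C.Descends v α w) : w ≠ v := by
  obtain ⟨u, -, huv, hpath⟩ := hd
  cases hpath with
  | refl => exact huv
  | tail _ hlast => exact hlast.2

theorem Descends.tail (hd : C.Descends v α x) (hb : C.BStep x y) (hyv : y ≠ v) :
    C.Descends v α y :=
  let ⟨u, he, huv, hpath⟩ := hd
  ⟨u, he, huv, hpath.tail ⟨hb, hyv⟩⟩

theorem Desc.tail (hd : C.Desc v x) (hb : C.BStep x y) (hyv : y ≠ v) : C.Desc v y :=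
  let ⟨β, hβ⟩ := hd
  ⟨β, hβ.tail hb hyv⟩

/-- An acyclic path `v ↓_α u ↓ ... ↓ w`, listed as the vertices `v :: u :: xs`. -/
def DescPathTo (C : LChart V A) (v : V) (α : ℕ) (w : V) : Prop :=
  ∃ (u : V) (xs : List V), C.Descends v α u ∧ (u :: xs).IsChain C.Desc ∧
    (u :: xs).getLast (List.cons_ne_nil u xs) = w ∧ (v :: u :: xs).Nodup

theorem DescPathTo.of_descends (hd : C.Descends v α w) : C.DescPathTo v α w :=
  ⟨w, [], hd, .singleton w, rfl, by simp [hd.ne_source.symm]⟩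

section Extend

variable {u : V} {xs : List V} (hd : C.Descends v α u) (hc : (u :: xs).IsChain C.Desc)
  (hn : (v :: u :: xs).Nodup)
include hd hc hn

theorem DescPathTo.of_mem (hy : y ∈ u :: xs) : C.DescPathTo v α y := by
  obtain ⟨xs', hpre, hlast⟩ := List.exists_cons_prefix_getLast_eq hy
  exact ⟨u, xs', hd, hc.prefix hpre, hlast, hn.sublist (hpre.sublist.cons_cons v)⟩

theorem DescPathTo.snoc (hdesc : C.Desc ((u :: xs).getLast (List.cons_ne_nil u xs)) y)
    (hy : y ∉ v :: u :: xs) : C.DescPathTo v α y := by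
  refine ⟨u, xs ++ [y], hd, hc.append (.singleton y) ?_, by simp, by simpa using hn.concat hy⟩
  simpa [List.getLast?_eq_some_getLast] using hdesc

theorem DescPathTo.of_eStep {n : ℕ}
    (he : C.EStep n ((u :: xs).getLast (List.cons_ne_nil u xs)) y)
    (hy : y ∉ v :: u :: xs) : C.DescPathTo v α y :=
  .snoc hd hc hn
    ⟨n, .of_eStep he fun h => hy (h ▸ List.mem_cons_of_mem v (List.getLast_mem _))⟩ hy

theorem DescPathTo.of_bStep (hb : C.BStep ((u :: xs).getLast (List.cons_ne_nil u xs)) y)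
    (hy : y ∉ v :: u :: xs) : C.DescPathTo v α y := by
  obtain rfl | ⟨l, x, rfl⟩ := List.eq_nil_or_concat' xs
  · exact .of_descends (hd.tail hb fun h => hy (h ▸ List.mem_cons_self))
  obtain ⟨hc', -, hlink⟩ :=
    List.isChain_append.1 (show ((u :: l) ++ [x]).IsChain C.Desc from hc)
  have hy' : y ∉ v :: u :: l := fun h => hy (by simp_all)
  refine .snoc hd hc' (hn.sublist (by simp)) ?_ hy'
  refine Desc.tail (x := x) ?_ (by simpa using hb) fun h => hy' (h ▸ ?_)
  · simpa [List.getLast?_eq_some_getLast] using hlink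
  · exact List.mem_cons_of_mem v (List.getLast_mem _)

end Extend

theorem DescPathTo.tail (hp : C.DescPathTo v α x) (hs : C.AnyStep x y) (hyv : y ≠ v) :
    C.DescPathTo v α y := by
  obtain ⟨u, xs, hd, hc, rfl, hn⟩ := hp
  by_cases hmem : y ∈ u :: xs
  · exact .of_mem hd hc hn hmem
  have hfresh : y ∉ v :: u :: xs := by simp_all
  obtain ⟨a, _ | n, htr⟩ := hs
  · exact .of_bStep hd hc hn ⟨a, htr⟩ hfresh
  · exact .of_eStep hd hc hn ⟨n.succ_pos, a, htr⟩ hfresh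

end LChart

theorem to_descends_path_general {V A : Type} (C : LChart V A)
    (v w : V) (α : ℕ)
    (hp : ∃ u : V, C.EStep α v u ∧ u ≠ v ∧
      Relation.ReflTransGen (fun x y => C.AnyStep x y ∧ y ≠ v) u w) :
    ∃ (u : V) (xs : List V),
      C.Descends v α u ∧ List.Chain C.Desc u xs ∧
      (u :: xs).getLast (List.cons_ne_nil u xs) = w ∧
      (v :: u :: xs).Nodup := by
  obtain ⟨u, he, huv, hpath⟩ := hp
  show C.DescPathTo v α w
  induction hpath with
  | refl => exact .of_descends (.of_eStep he huv)
  | tail _ hstep ih => exact ih.tail hstep.1 hstep.2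

/-- If there is a path from `v` starting with an `α`-level entry transition and then
arbitrary transitions, all of whose targets avoid `v`, ending at `w`, then there is
an acyclic path from `v` to `w` consisting of an `α`-descends step followed by
finitely many descends-in-loop-to steps. -/
theorem to_descends_path {V A : Type} [Finite V] (C : LChart V A) (h : C.IsLLEE)
    (v w : V) (α : ℕ)
    (hp : ∃ u : V, C.EStep α v u ∧ u ≠ v ∧
      Relation.ReflTransGen (fun x y => C.AnyStep x y ∧ y ≠ v) u w) :
    ∃ (u : V) (xs : List V),
      C.Descends v α u ∧ List.Chain C.Desc u xs ∧
      (u :: xs).getLast (List.cons_ne_nil u xs) = w ∧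
      (v :: u :: xs).Nodup :=
  to_descends_path_general C v w α hp
end

section
/- In a chart with a LLEE-witness, if there is a path from v beginning with an α-level entry transition, with all targets avoiding v, that ends with an entry transition of level β, then α > β. -/
/-- A chain of descents: `v` descends (at level `α`) to some vertex, which in turn
descends at a strictly smaller level to another, etc., ending at `x` with last
level `γ`. -/
inductive DChain {V A : Type} (C : LChart V A) (v : V) (α : ℕ) : ℕ → V → Prop
  | base (x : V) : C.Descends v α x → DChain C v α α x
  | cons {γ : ℕ} {w : V} (δ : ℕ) (y : V) : DChain C v α γ w → C.Descends w δ y → δ < γ →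
      DChain C v α δ y

lemma DChain_le {V A : Type} {C : LChart V A} {v : V} {α γ : ℕ} {x : V}
    (h : DChain C v α γ x) : γ ≤ α := by
  induction h with
  | base _ _ => exact le_refl α
  | cons _ _ _ _ hlt ih => omega

lemma DChain_entry {V A : Type} {C : LChart V A} (hC : C.IsLLEE) {v : V} {α γ : ℕ} {x : V}
    (h : DChain C v α γ x) {β : ℕ} (he : C.HasEntry x β) : β < γ := by
  cases h with
  | base _ hd =>
    by_contra h'
    exact hC.w2b _ _ _ hd β (not_lt.1 h') he
  | cons _ _ hc hd hlt =>
    by_contra h'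
    exact hC.w2b _ _ _ hd β (not_lt.1 h') he

lemma DChain_bstep {V A : Type} {C : LChart V A} {v x x' : V} {α γ : ℕ}
    (h : DChain C v α γ x) (hs : C.BStep x x') (hne : x' ≠ v) :
    ∃ γ', DChain C v α γ' x' := by
  cases h with
  | base _ hd =>
    obtain ⟨t, het, htv, hpath⟩ := hd
    exact ⟨α, .base x' ⟨t, het, htv, hpath.tail ⟨hs, hne⟩⟩⟩
  | @cons γ' w _ _ hc hd hlt =>
    by_cases hw : x' = w
    · subst hw; exact ⟨γ', hc⟩
    · obtain ⟨t, het, htw, hpath⟩ := hd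
      exact ⟨γ, .cons γ x' hc ⟨t, het, htw, hpath.tail ⟨hs, hw⟩⟩ hlt⟩

lemma DChain_estep {V A : Type} {C : LChart V A} (hC : C.IsLLEE) {v x x' : V} {α γ δ : ℕ}
    (h : DChain C v α γ x) (hs : C.EStep δ x x') :
    ∃ γ', DChain C v α γ' x' := by
  obtain ⟨hδ, a, htr⟩ := hs
  have hδγ : δ < γ := DChain_entry hC h ⟨hδ, a, x', htr⟩
  by_cases hxx : x' = x
  · subst hxx; exact ⟨γ, h⟩
  · exact ⟨δ, .cons δ x' h ⟨x', ⟨hδ, a, htr⟩, hxx, .refl⟩ hδγ⟩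

/-- If there is a path from `v` beginning with an `α`-level entry transition, with
all targets avoiding `v`, that ends with an entry transition of level `β`, then
`α > β`. -/
theorem layeredness_path {V A : Type} [Finite V] (C : LChart V A) (h : C.IsLLEE)
    (v u u' : V) (α β : ℕ)
    (hp : ∃ t : V, C.EStep α v t ∧ t ≠ v ∧
      Relation.ReflTransGen (fun x y => C.AnyStep x y ∧ y ≠ v) t u)
    (he : C.EStep β u u') :
    β < α := by
  obtain ⟨t, hvt, htv, hpath⟩ := hp
  have hstart : DChain C v α α t := .base t ⟨t, hvt, htv, .refl⟩
  have hchain : ∃ γ, DChain C v α γ u := by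
    clear he
    induction hpath with
    | refl => exact ⟨α, hstart⟩
    | tail _ hbc ih =>
      obtain ⟨γ, hγ⟩ := ih
      obtain ⟨⟨a, n, htr⟩, hcv⟩ := hbc
      match n, htr with
      | 0, htr => exact DChain_bstep hγ ⟨a, htr⟩ hcv
      | (m + 1), htr => exact DChain_estep h hγ ⟨Nat.succ_pos m, a, htr⟩
  obtain ⟨γ, hγ⟩ := hchain
  obtain ⟨hβ, a, htr⟩ := he
  have h1 : β < γ := DChain_entry h hγ ⟨hβ, a, u', htr⟩
  have h2 := DChain_le hγ
  omega
end

section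
/- In a chart with a LLEE-witness, the reflexive-transitive closure ⇢* of the loops-back-to relation is a partial order (reflexive, transitive, antisymmetric) on the vertices. -/

lemma loopsBack_level {V A : Type} (C : LChart V A) (h : C.IsLLEE) {x y : V}
    (hxy : Relation.TransGen C.LoopsBack x y) :
    ∃ α : ℕ, C.HasEntry y α ∧ ∀ β : ℕ, C.HasEntry x β → β < α := by
  induction hxy with
  | single hstep =>
      obtain ⟨⟨α, u, hE, _, _⟩, _⟩ := hstep
      refine ⟨α, ⟨hE.1, hE.2.choose, u, hE.2.choose_spec⟩, fun β hβ => ?_⟩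
      by_contra hle
      exact h.w2b _ _ _ ⟨u, hE, ‹_›, ‹_›⟩ β (le_of_not_gt hle) hβ
  | tail _ hstep ih =>
      obtain ⟨α, hα, hlt⟩ := ih
      obtain ⟨⟨γ, u, hE, hne, hpath⟩, _⟩ := hstep
      refine ⟨γ, ⟨hE.1, hE.2.choose, u, hE.2.choose_spec⟩, fun β hβ => ?_⟩
      have hαγ : α < γ := by
        by_contra hle
        exact h.w2b _ _ _ ⟨u, hE, hne, hpath⟩ α (le_of_not_gt hle) hα
      exact lt_trans (hlt β hβ) hαγ

lemma loopsBack_irrefl {V A : Type} (C : LChart V A) (h : C.IsLLEE) (x : V) :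
    ¬ Relation.TransGen C.LoopsBack x x := by
  intro hx
  obtain ⟨α, hα, hlt⟩ := loopsBack_level C h hx
  exact lt_irrefl α (hlt α hα)

/-- The reflexive-transitive closure of the loops-back-to relation is a partial
order (reflexive, transitive, antisymmetric) on the vertices. -/
theorem loopsBack_partialOrder {V A : Type} [Finite V] (C : LChart V A)
    (h : C.IsLLEE) :
    (∀ x : V, Relation.ReflTransGen C.LoopsBack x x) ∧
    (∀ x y z : V, Relation.ReflTransGen C.LoopsBack x y →
      Relation.ReflTransGen C.LoopsBack y z → Relation.ReflTransGen C.LoopsBack x z) ∧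
    (∀ x y : V, Relation.ReflTransGen C.LoopsBack x y →
      Relation.ReflTransGen C.LoopsBack y x → x = y) := by
  refine ⟨fun x => .refl, fun x y z h1 h2 => h1.trans h2, fun x y hxy hyx => ?_⟩
  by_contra hne
  rcases (Relation.reflTransGen_iff_eq_or_transGen.mp hxy) with rfl | hxy'
  · exact hne rfl
  rcases (Relation.reflTransGen_iff_eq_or_transGen.mp hyx) with rfl | hyx'
  · exact hne rfl
  exact loopsBack_irrefl C h x (hxy'.trans hyx')
end

section
/- In a chart with a LLEE-witness, the loops-back-to relation is a total order on successors: if w ⇢ v1 and w ⇢ v2 then v1 ⇢ v2, or v1 = v2, or v2 ⇢ v1. -/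
/-!
Follow a body path from `w` to `v₁` until it first meets `v₁` or `v₂`. If it meets `v₂` first,
the loop of `v₁` descends to `v₂` and the rest of the path gives `v₂ ⇢ v₁`; if it meets `v₁`
first, the loop of `v₂` descends to `v₁`. Doing the same with the roles swapped, the only
remaining case is that `v₁` and `v₂` descend in loops to each other, which layeredness forbids.
-/

open Relation

theorem Relation.TransGen.exists_first_not {α : Type*} {R : α → α → Prop} (P : α → Prop)
    {a b : α} (h : TransGen R a b) (hb : ¬ P b) :
    ∃ c d, ReflTransGen (fun x y => R x y ∧ P y) a c ∧ R c d ∧ ¬ P d ∧ ReflTransGen R d b := by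
  induction h using TransGen.head_induction_on with
  | single hr => exact ⟨_, b, .refl, hr, hb, .refl⟩
  | @head a c hr hcb ih =>
    by_cases hc : P c
    · obtain ⟨c', d, hpre, hstep, hd, hsuf⟩ := ih
      exact ⟨c', d, .head ⟨hr, hc⟩ hpre, hstep, hd, hsuf⟩
    · exact ⟨a, c, .refl, hr, hc, hcb.to_reflTransGen⟩

namespace LChart

variable {V A : Type} {C : LChart V A}

theorem Descends.hasEntry {v w : V} {α : ℕ} (h : C.Descends v α w) : C.HasEntry v α := by
  obtain ⟨u, ⟨hα, a, hu⟩, -⟩ := h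
  exact ⟨hα, a, u, hu⟩

theorem Descends.trans_avoiding {v w x : V} {α : ℕ} (h : C.Descends v α w)
    (hwx : ReflTransGen (fun y z => C.BStep y z ∧ z ≠ v) w x) : C.Descends v α x := by
  obtain ⟨u, he, hu, huw⟩ := h
  exact ⟨u, he, hu, huw.trans hwx⟩

theorem IsLLEE.desc_asymm (h : C.IsLLEE) {v w : V} (hvw : C.Desc v w) : ¬ C.Desc w v := by
  rintro ⟨β, hwv⟩
  obtain ⟨α, hvw⟩ := hvw
  rcases le_total α β with hαβ | hβα
  · exact h.w2b v w α hvw β hαβ hwv.hasEntry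
  · exact h.w2b w v β hwv α hβα hvw.hasEntry

theorem LoopsBack.loopsBack_or_desc {w v₁ v₂ : V} (h₁ : C.LoopsBack w v₁) (h₂ : C.Desc v₂ w)
    (hv : v₁ ≠ v₂) : C.LoopsBack v₂ v₁ ∨ C.Desc v₂ v₁ := by
  obtain ⟨⟨α₁, hd₁⟩, hb₁⟩ := h₁
  obtain ⟨α₂, hd₂⟩ := h₂
  obtain ⟨c, d, hpre, hstep, hd, hsuf⟩ :=
    hb₁.exists_first_not (fun x => x ≠ v₁ ∧ x ≠ v₂) (by simp)
  have hfirst : v₁ = d ∨ v₂ = d := by tauto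
  rcases hfirst with rfl | rfl
  · have hpath : ReflTransGen (fun y z => C.BStep y z ∧ z ≠ v₂) w v₁ :=
      (ReflTransGen.mono (fun _ _ h => ⟨h.1, h.2.2⟩) _ _ hpre).tail ⟨hstep, hv⟩
    exact .inr ⟨α₂, hd₂.trans_avoiding hpath⟩
  · have hpath : ReflTransGen (fun y z => C.BStep y z ∧ z ≠ v₁) w v₂ :=
      (ReflTransGen.mono (fun _ _ h => ⟨h.1, h.2.1⟩) _ _ hpre).tail ⟨hstep, hv.symm⟩
    exact .inl ⟨⟨α₁, hd₁.trans_avoiding hpath⟩,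
      (reflTransGen_iff_eq_or_transGen.1 hsuf).resolve_left hv⟩

end LChart

theorem loopsBack_total_on_successors_general {V A : Type} (C : LChart V A)
    (h : C.IsLLEE) (w v1 v2 : V)
    (h1 : C.LoopsBack w v1) (h2 : C.LoopsBack w v2) :
    C.LoopsBack v1 v2 ∨ v1 = v2 ∨ C.LoopsBack v2 v1 := by
  by_cases hv : v1 = v2
  · exact .inr (.inl hv)
  rcases h1.loopsBack_or_desc h2.1 hv with h21 | d21
  · exact .inr (.inr h21)
  rcases h2.loopsBack_or_desc h1.1 (Ne.symm hv) with h12 | d12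
  · exact .inl h12
  · exact absurd d21 (h.desc_asymm d12)

/-- The loops-back-to relation is a total order on successors: if `w ⇢ v1` and
`w ⇢ v2` then `v1 ⇢ v2`, or `v1 = v2`, or `v2 ⇢ v1`. -/
theorem loopsBack_total_on_successors {V A : Type} [Finite V] (C : LChart V A)
    (h : C.IsLLEE) (w v1 v2 : V)
    (h1 : C.LoopsBack w v1) (h2 : C.LoopsBack w v2) :
    C.LoopsBack v1 v2 ∨ v1 = v2 ∨ C.LoopsBack v2 v1 :=
  loopsBack_total_on_successors_general C h w v1 v2 h1 h2
end

section
/- In a chart with a LLEE-witness, if ⇢* has the least-upper-bound property on a nonempty set that possesses some upper bound, and if v1 and v2 are distinct vertices both directly looping back to u (v1 ⇢d u and v2 ⇢d u), then there is no vertex w with w ⇢* v1 and w ⇢* v2. -/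
namespace LLEEAux

open Relation

variable {V A : Type} {C : LChart V A}

/-- Extending a descends-path by a body path avoiding `v`. -/
lemma descends_extend {v w x : V} {α : ℕ} (hd : C.Descends v α w)
    (hp : ReflTransGen (fun a b => C.BStep a b ∧ b ≠ v) w x) : C.Descends v α x := by
  obtain ⟨u0, he, hne, hpath⟩ := hd
  exact ⟨u0, he, hne, hpath.trans hp⟩

lemma descends_hasEntry {v w : V} {α : ℕ} (hd : C.Descends v α w) : C.HasEntry v α := by
  obtain ⟨u0, ⟨hpos, a, htr⟩, _, _⟩ := hd
  exact ⟨hpos, a, u0, htr⟩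

/-- Entry levels of a vertex that some `v` descends to are strictly below the loop level. -/
lemma entry_lt {v w : V} {α β : ℕ} (h : C.IsLLEE) (hd : C.Descends v α w)
    (he : C.HasEntry w β) : β < α := by
  by_contra hle
  exact h.w2b v w α hd β (le_of_not_gt hle) he

/-- Path splitting: a path either avoids `p` (as a target) or reaches `p`
(avoiding `b` as a target) before reaching `b`. -/
lemma split {R : V → V → Prop} {a b : V} (p : V) (hpb : p ≠ b)
    (hab : ReflTransGen R a b) :
    ReflTransGen (fun x y => R x y ∧ y ≠ p) a b ∨
      (ReflTransGen (fun x y => R x y ∧ y ≠ b) a p ∧ TransGen R p b) := by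
  induction hab using Relation.ReflTransGen.head_induction_on with
  | refl => exact Or.inl ReflTransGen.refl
  | @head a' c hstep hrest ih =>
    by_cases hcp : c = p
    · subst hcp
      refine Or.inr ⟨ReflTransGen.single ⟨hstep, hpb⟩, ?_⟩
      rcases hrest.cases_head with heq | ⟨d, hcd, hdb⟩
      · exact absurd heq hpb
      · exact TransGen.head' hcd hdb
    · rcases ih with havoid | ⟨hto, htg⟩
      · exact Or.inl (havoid.head ⟨hstep, hcp⟩)
      · by_cases hcb : c = b
        · subst hcb
          exact Or.inl (ReflTransGen.single ⟨hstep, hcp⟩)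
        · exact Or.inr ⟨hto.head ⟨hstep, hcb⟩, htg⟩

lemma avoid_end {R : V → V → Prop} {a v : V}
    (hp : ReflTransGen (fun x y => R x y ∧ y ≠ v) a v) : a = v := by
  rcases hp.cases_tail with heq | ⟨c, _, _, hne⟩
  · exact heq.symm
  · exact absurd rfl hne

lemma loopsBack_irrefl {v : V} (hv : C.LoopsBack v v) : False := by
  obtain ⟨⟨α, u0, _, hne, hpath⟩, _⟩ := hv
  exact hne (avoid_end hpath)

/-- The level measure: supremum of entry levels. -/
noncomputable def nu (C : LChart V A) (x : V) : ℕ := sSup {β | C.HasEntry x β}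

lemma nu_mono {w v : V} (h : C.IsLLEE) (hwv : C.LoopsBack w v)
    (hv : ∃ v', C.LoopsBack v v') : nu C w < nu C v := by
  obtain ⟨⟨α, hd⟩, _⟩ := hwv
  obtain ⟨v', ⟨⟨β, hd'⟩, _⟩⟩ := hv
  have hEv : C.HasEntry v α := descends_hasEntry hd
  have hbddv : BddAbove {γ | C.HasEntry v γ} :=
    ⟨β, fun γ hγ => le_of_lt (entry_lt h hd' hγ)⟩
  have hge : α ≤ nu C v := le_csSup hbddv hEv
  have hbddw : BddAbove {γ | C.HasEntry w γ} :=
    ⟨α, fun γ hγ => le_of_lt (entry_lt h hd hγ)⟩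
  have hpos : 0 < α := hEv.1
  have hlt : nu C w < α := by
    rcases Set.eq_empty_or_nonempty {γ | C.HasEntry w γ} with hE | hE
    · have : nu C w = 0 := by simp [nu, hE]
      omega
    · have := Nat.sSup_mem hE hbddw
      exact entry_lt h hd this
  omega

lemma no_cycle_aux {a b : V} (h : C.IsLLEE) (hab : TransGen C.LoopsBack a b)
    (hb : ∃ c, C.LoopsBack b c) : nu C a < nu C b := by
  induction hab with
  | single hstep => exact nu_mono h hstep hb
  | tail _ hstep ih =>
    exact lt_trans (ih ⟨_, hstep⟩) (nu_mono h hstep hb)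

lemma acyclic {a : V} (h : C.IsLLEE) (ha : TransGen C.LoopsBack a a) : False := by
  obtain ⟨c, hac, -⟩ := (Relation.TransGen.head'_iff).mp ha
  exact lt_irrefl _ (no_cycle_aux h ha ⟨c, hac⟩)

/-- One-step comparability: two vertices that a common `w` loops back to are
related by loops-back. -/
lemma comp_step {w v1 v2 : V} (h : C.IsLLEE) (h1 : C.LoopsBack w v1)
    (h2 : C.LoopsBack w v2) (hne : v1 ≠ v2) :
    C.LoopsBack v1 v2 ∨ C.LoopsBack v2 v1 := by
  obtain ⟨⟨α1, D1⟩, P1⟩ := h1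
  obtain ⟨⟨α2, D2⟩, P2⟩ := h2
  rcases split v1 hne P2.to_reflTransGen with havoid | ⟨hto, htg⟩
  · -- w reaches v2 avoiding v1, so v1 descends to v2
    have D1v2 : C.Descends v1 α1 v2 := descends_extend D1 havoid
    rcases split v2 (Ne.symm hne) P1.to_reflTransGen with havoid' | ⟨hto', htg'⟩
    · -- also v2 descends to v1: contradiction by layeredness
      have D2v1 : C.Descends v2 α2 v1 := descends_extend D2 havoid'
      have h12 : α2 < α1 := entry_lt h D1v2 (descends_hasEntry D2)
      have h21 : α1 < α2 := entry_lt h D2v1 (descends_hasEntry D1)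
      omega
    · exact Or.inr ⟨⟨α1, descends_extend D1 hto'⟩, htg'⟩
  · exact Or.inl ⟨⟨α2, descends_extend D2 hto⟩, htg⟩

lemma comparable [Finite V] (h : C.IsLLEE) :
    ∀ w v1 v2 : V, ReflTransGen C.LoopsBack w v1 → ReflTransGen C.LoopsBack w v2 →
      ReflTransGen C.LoopsBack v1 v2 ∨ ReflTransGen C.LoopsBack v2 v1 := by
  have hirr : IsIrrefl V (TransGen fun x y => C.LoopsBack y x) :=
    ⟨fun a ha => acyclic h ((Relation.transGen_swap).mpr ha)⟩
  have hwf : WellFounded (TransGen fun x y => C.LoopsBack y x) :=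
    @Finite.wellFounded_of_trans_of_irrefl _ _ _ inferInstance hirr
  have hwf' : WellFounded (fun x y => C.LoopsBack y x) :=
    @Subrelation.wf V (TransGen fun x y => C.LoopsBack y x) (fun x y => C.LoopsBack y x)
      (fun {x y} hxy => TransGen.single hxy) hwf
  intro w
  induction w using hwf'.induction with
  | _ w IH =>
    intro v1 v2 h1 h2
    rcases h1.cases_head with rfl | ⟨x, hwx, hx1⟩
    · exact Or.inl h2
    rcases h2.cases_head with rfl | ⟨y, hwy, hy2⟩
    · exact Or.inr h1
    by_cases hxy : x = y
    · subst hxy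
      exact IH x hwx v1 v2 hx1 hy2
    · rcases comp_step h hwx hwy hxy with hxy' | hyx'
      · exact IH x hwx v1 v2 hx1 (hy2.head hxy')
      · exact IH y hwy v1 v2 (hx1.head hyx') hy2

lemma no_below {u v1 v2 : V} (h : C.IsLLEE) (hd1 : C.DLoopsBack v1 u)
    (hd2 : C.DLoopsBack v2 u) (hne : v1 ≠ v2)
    (hcomp : ReflTransGen C.LoopsBack v1 v2) : False := by
  rcases hcomp.cases_head with heq | ⟨x, h1x, hx2⟩
  · exact hne heq
  have hu2 : ReflTransGen C.LoopsBack u v2 := by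
    rcases hd1.2 x h1x with rfl | hux
    · exact hx2
    · exact hx2.head hux
  exact acyclic h (TransGen.tail' hu2 hd2.1)

end LLEEAux

/-- If `⇢*` has the least-upper-bound property (every nonempty set possessing an
upper bound has a least upper bound), and distinct `v1`, `v2` both directly loop
back to `u`, then no vertex `w` satisfies both `w ⇢* v1` and `w ⇢* v2`. -/
theorem dLoopsBack_no_common_lower {V A : Type} [Finite V] (C : LChart V A)
    (h : C.IsLLEE)
    (hlub : ∀ S : Set V, S.Nonempty →
      (∃ ub : V, ∀ x ∈ S, Relation.ReflTransGen C.LoopsBack x ub) →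
      ∃ m : V, (∀ x ∈ S, Relation.ReflTransGen C.LoopsBack x m) ∧
        ∀ ub : V, (∀ x ∈ S, Relation.ReflTransGen C.LoopsBack x ub) →
          Relation.ReflTransGen C.LoopsBack m ub)
    (u v1 v2 : V) (hne : v1 ≠ v2)
    (h1 : C.DLoopsBack v1 u) (h2 : C.DLoopsBack v2 u) :
    ¬ ∃ w : V, Relation.ReflTransGen C.LoopsBack w v1 ∧
      Relation.ReflTransGen C.LoopsBack w v2 := by
  rintro ⟨w, hw1, hw2⟩
  rcases LLEEAux.comparable h w v1 v2 hw1 hw2 with hc | hc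
  · exact LLEEAux.no_below h h1 h2 hne hc
  · exact LLEEAux.no_below h h2 h1 hne.symm hc
end

section
/- Let C be a chart and v1, v2 vertices with v1 bisimilar to v2 within C (related by some bisimulation on C). Then the connect-v1-through-to-v2 chart, obtained by redirecting all incoming transitions of v1 to v2 (and making v2 the start vertex if v1 was, then removing unreachable vertices), is bisimilar to C. -/
/-- A chart: a rooted labelled transition system with a start vertex and a
termination predicate marking the termination sink √. -/
structure Chart (V : Type) (A : Type) : Type where
  start : V
  term : V → Prop
  Tr : V → A → V → Prop

namespace Chart

variable {A : Type}

/-- `B` is a bisimulation between the charts `C1` and `C2`: it relates the start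
vertices, and related pairs satisfy the forth, back and termination conditions. -/
def IsBisim {V1 V2 : Type} (C1 : Chart V1 A) (C2 : Chart V2 A)
    (B : V1 → V2 → Prop) : Prop :=
  B C1.start C2.start ∧
  ∀ u v, B u v →
    (∀ (a : A) (u' : V1), C1.Tr u a u' → ∃ v' : V2, C2.Tr v a v' ∧ B u' v') ∧
    (∀ (a : A) (v' : V2), C2.Tr v a v' → ∃ u' : V1, C1.Tr u a u' ∧ B u' v') ∧
    (C1.term u ↔ C2.term v)

/-- Two charts are bisimilar if there is a bisimulation between them. -/
def Bisimilar {V1 V2 : Type} (C1 : Chart V1 A) (C2 : Chart V2 A) : Prop :=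
  ∃ B : V1 → V2 → Prop, IsBisim C1 C2 B

/-- A bisimulation on a single chart (forth, back and termination conditions only;
it need not relate the start vertex to itself). -/
def IsSelfBisim {V : Type} (C : Chart V A) (B : V → V → Prop) : Prop :=
  ∀ u v, B u v →
    (∀ (a : A) (u' : V), C.Tr u a u' → ∃ v' : V, C.Tr v a v' ∧ B u' v') ∧
    (∀ (a : A) (v' : V), C.Tr v a v' → ∃ u' : V, C.Tr u a u' ∧ B u' v') ∧
    (C.term u ↔ C.term v)

end Chart

namespace Chart

variable {V A : Type}

/-- The transition steps of the chart obtained from `C` by redirecting all incoming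
transitions of `v1` over to `v2`. -/
def RStep (C : Chart V A) (v1 v2 : V) (x y : V) : Prop :=
  ∃ a : A, (C.Tr x a y ∧ y ≠ v1) ∨ (C.Tr x a v1 ∧ y = v2)

/-- The start vertex after connecting `v1` through to `v2`: `v2` if `v1` was the
start vertex, the old start vertex otherwise. -/
noncomputable def newStart (C : Chart V A) (v1 v2 : V) : V :=
  open Classical in
  if C.start = v1 then v2 else C.start

/-- The connect-`v1`-through-to-`v2` chart: all incoming transitions of `v1` are
redirected to `v2`, `v2` becomes the start vertex if `v1` was, and unreachable
vertices are removed (the vertices are the ones reachable from the new start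
vertex via the redirected transitions). -/
noncomputable def connectThrough (C : Chart V A) (v1 v2 : V) :
    Chart {x : V // Relation.ReflTransGen (C.RStep v1 v2) (C.newStart v1 v2) x} A where
  start := ⟨C.newStart v1 v2, Relation.ReflTransGen.refl⟩
  term := fun x => C.term x.1
  Tr := fun x a y => (C.Tr x.1 a y.1 ∧ y.1 ≠ v1) ∨ (C.Tr x.1 a v1 ∧ y.1 = v2)

end Chart

lemma eqvGen_selfBisim {V A : Type} (C : Chart V A) (B : V → V → Prop)
    (hB : Chart.IsSelfBisim C B) : Chart.IsSelfBisim C (Relation.EqvGen B) := by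
  intro u v h
  induction h with
  | rel u v huv =>
    obtain ⟨hf, hb, ht⟩ := hB u v huv
    exact ⟨fun a u' h => (hf a u' h).imp (fun v' ⟨h1, h2⟩ => ⟨h1, Relation.EqvGen.rel _ _ h2⟩),
      fun a v' h => (hb a v' h).imp (fun u' ⟨h1, h2⟩ => ⟨h1, Relation.EqvGen.rel _ _ h2⟩), ht⟩
  | refl u =>
    exact ⟨fun a u' h => ⟨u', h, Relation.EqvGen.refl u'⟩,
      fun a v' h => ⟨v', h, Relation.EqvGen.refl v'⟩, Iff.rfl⟩
  | symm u v _ ih =>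
    obtain ⟨hf, hb, ht⟩ := ih
    exact ⟨fun a u' h => (hb a u' h).imp (fun v' ⟨h1, h2⟩ => ⟨h1, Relation.EqvGen.symm _ _ h2⟩),
      fun a v' h => (hf a v' h).imp (fun u' ⟨h1, h2⟩ => ⟨h1, Relation.EqvGen.symm _ _ h2⟩),
      ht.symm⟩
  | trans u v w _ _ ih1 ih2 =>
    obtain ⟨hf1, hb1, ht1⟩ := ih1
    obtain ⟨hf2, hb2, ht2⟩ := ih2
    refine ⟨fun a u' h => ?_, fun a w' h => ?_, ht1.trans ht2⟩
    · obtain ⟨v', hv', h1⟩ := hf1 a u' h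
      obtain ⟨w', hw', h2⟩ := hf2 a v' hv'
      exact ⟨w', hw', Relation.EqvGen.trans _ _ _ h1 h2⟩
    · obtain ⟨v', hv', h2⟩ := hb2 a w' h
      obtain ⟨u', hu', h1⟩ := hb1 a v' hv'
      exact ⟨u', hu', Relation.EqvGen.trans _ _ _ h1 h2⟩

/-- If `v1` and `v2` are bisimilar vertices of the chart `C` (related by some
bisimulation on `C`), then the connect-`v1`-through-to-`v2` chart is bisimilar
to `C`. -/
theorem connectThrough_bisimilar {V A : Type} [Finite V] (C : Chart V A)
    (v1 v2 : V) (B : V → V → Prop)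
    (hB : Chart.IsSelfBisim C B) (h12 : B v1 v2) :
    Chart.Bisimilar (Chart.connectThrough C v1 v2) C := by
  set E := Relation.EqvGen B with hE
  have hEB := eqvGen_selfBisim C B hB
  have h21 : E v2 v1 := Relation.EqvGen.symm _ _ (Relation.EqvGen.rel _ _ h12)
  refine ⟨fun x u => E x.1 u, ?_, ?_⟩
  · show E (C.newStart v1 v2) C.start
    unfold Chart.newStart
    split
    · next h => rw [← h] at h21; exact h21
    · exact Relation.EqvGen.refl _
  · rintro ⟨x, hx⟩ u h
    obtain ⟨hf, hb, ht⟩ := hEB x u h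
    refine ⟨?_, ?_, ht⟩
    · rintro a ⟨y, hy⟩ (⟨htr, -⟩ | ⟨htr, hy2⟩)
      · exact hf a y htr
      · obtain ⟨v', hv', hEv⟩ := hf a v1 htr
        refine ⟨v', hv', ?_⟩
        show E y v'
        rw [show y = v2 from hy2]
        exact Relation.EqvGen.trans _ _ _ h21 hEv
    · rintro a v' htr
      obtain ⟨w, hw, hEw⟩ := hb a v' htr
      by_cases hwv : w = v1
      · refine ⟨⟨v2, Relation.ReflTransGen.tail hx ⟨a, Or.inr ⟨hwv ▸ hw, rfl⟩⟩⟩,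
          Or.inr ⟨hwv ▸ hw, rfl⟩, Relation.EqvGen.trans _ _ _ h21 (hwv ▸ hEw)⟩
      · exact ⟨⟨w, Relation.ReflTransGen.tail hx ⟨a, Or.inl ⟨hw, hwv⟩⟩⟩,
          Or.inl ⟨hw, hwv⟩, hEw⟩
end

section
/- Let φ: V1 → V2 be a functional bisimulation between charts C1 and C2 (mapping √ to √ and the start vertex to the start vertex). If s2 is a provable solution of C2 with respect to the proof system BBP, then s2 ∘ φ is a provable solution of C1, and it has the same principal value as s2. -/
/-- Provable equality in the proof system BBP: equational logic together with the
axioms (B1)–(B7), (BKS1), (BKS2) and the fixed-point rule RSP*. -/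
inductive BBP {A : Type} : StarExp A → StarExp A → Prop
  | refl (e : StarExp A) : BBP e e
  | symm {e f : StarExp A} : BBP e f → BBP f e
  | trans {e f g : StarExp A} : BBP e f → BBP f g → BBP e g
  | sum_congr {e1 e2 f1 f2 : StarExp A} :
      BBP e1 f1 → BBP e2 f2 → BBP (.sum e1 e2) (.sum f1 f2)
  | prod_congr {e1 e2 f1 f2 : StarExp A} :
      BBP e1 f1 → BBP e2 f2 → BBP (.prod e1 e2) (.prod f1 f2)
  | star_congr {e1 e2 f1 f2 : StarExp A} :
      BBP e1 f1 → BBP e2 f2 → BBP (.star e1 e2) (.star f1 f2)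
  | B1 (x y : StarExp A) : BBP (.sum x y) (.sum y x)
  | B2 (x y z : StarExp A) : BBP (.sum (.sum x y) z) (.sum x (.sum y z))
  | B3 (x : StarExp A) : BBP (.sum x x) x
  | B4 (x y z : StarExp A) : BBP (.prod (.sum x y) z) (.sum (.prod x z) (.prod y z))
  | B5 (x y z : StarExp A) : BBP (.prod (.prod x y) z) (.prod x (.prod y z))
  | B6 (x : StarExp A) : BBP (.sum x .zero) x
  | B7 (x : StarExp A) : BBP (.prod .zero x) .zero
  | BKS1 (x y : StarExp A) : BBP (.sum (.prod x (.star x y)) y) (.star x y)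
  | BKS2 (x y z : StarExp A) : BBP (.prod (.star x y) z) (.star x (.prod y z))
  | RSP {x y z : StarExp A} : BBP x (.sum (.prod y x) z) → BBP x (.star y z)

/-- The sum `Σ_{i=1}^k e_i` of a list of star expressions: `0` for the empty list,
`e` for a singleton, and otherwise nested to the left. -/
def sumList {A : Type} : List (StarExp A) → StarExp A
  | [] => StarExp.zero
  | e :: es => es.foldl StarExp.sum e

/-- `s` is a provable solution of the chart `C`: for every non-terminating vertex
`v`, with `as` an enumeration of the actions of the transitions from `v` to the
termination sink √ and `bs` an enumeration of the remaining transitions from `v`,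
BBP proves `s(v) = (Σ_{i=1}^m a_i) + (Σ_{j=1}^n b_j · s(w_j))`. -/
def IsSolution {V A : Type} (C : Chart V A) (s : V → StarExp A) : Prop :=
  ∀ v : V, ¬ C.term v →
    ∃ (as : List A) (bs : List (A × V)),
      (∀ a : A, a ∈ as ↔ ∃ w : V, C.term w ∧ C.Tr v a w) ∧
      (∀ p : A × V, p ∈ bs ↔ (¬ C.term p.2 ∧ C.Tr v p.1 p.2)) ∧
      BBP (s v)
        (StarExp.sum (sumList (as.map StarExp.act))
          (sumList (bs.map fun p => StarExp.prod (StarExp.act p.1) (s p.2))))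

/-
Pulling a solution back along a functional bisimulation `φ` changes no equation: the forth and back
conditions say that `(a, u') ↦ (a, φ u')` maps the transitions of `v` onto those of `φ v`, preserving
termination, so the right-hand side of the equation at `v` for `s₂ ∘ φ` lists the same summands as
the equation at `φ v` for `s₂`, possibly with repetitions. Such sums are equal already by the axioms
for `+`.
-/

namespace BBP

variable {A : Type}

theorem foldl_sum : ∀ (l : List (StarExp A)) (e : StarExp A),
    BBP (l.foldl .sum e) (.sum e (sumList l))
  | [], e => .symm (.B6 e)
  | f :: l, e =>
    .trans (foldl_sum l (.sum e f))
      (.trans (.B2 e f _) (.sum_congr (.refl e) (.symm (foldl_sum l f))))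

theorem sum_sumList_of_mem {e : StarExp A} :
    ∀ {l : List (StarExp A)}, e ∈ l → BBP (.sum e (sumList l)) (sumList l)
  | f :: l, h => by
    have hcons := foldl_sum l f
    refine .trans (.sum_congr (.refl e) hcons) (.trans (.symm (.B2 e f _)) ?_)
    rcases List.mem_cons.1 h with rfl | hl
    · exact .trans (.sum_congr (.B3 e) (.refl _)) (.symm hcons)
    · exact .trans (.sum_congr (.B1 e f) (.refl _))
        (.trans (.B2 f e _) (.trans (.sum_congr (.refl f) (sum_sumList_of_mem hl)) (.symm hcons)))

theorem sum_sumList_of_subset {l₂ : List (StarExp A)} :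
    ∀ {l₁ : List (StarExp A)}, l₁ ⊆ l₂ → BBP (.sum (sumList l₁) (sumList l₂)) (sumList l₂)
  | [], _ => .trans (.B1 _ _) (.B6 _)
  | e :: l₁, h =>
    .trans (.sum_congr (foldl_sum l₁ e) (.refl _))
      (.trans (.B2 e _ _)
        (.trans (.sum_congr (.refl e) (sum_sumList_of_subset (List.subset_of_cons_subset h)))
          (sum_sumList_of_mem (h List.mem_cons_self))))

theorem sumList_congr {l₁ l₂ : List (StarExp A)} (h : ∀ e, e ∈ l₁ ↔ e ∈ l₂) :
    BBP (sumList l₁) (sumList l₂) :=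
  .trans (.symm (sum_sumList_of_subset fun e he => (h e).2 he))
    (.trans (.B1 _ _) (sum_sumList_of_subset fun e he => (h e).1 he))

end BBP

namespace Chart

variable {A V : Type}

def steps (C : Chart V A) (v : V) : Set (A × V) :=
  {p | ¬ C.term p.2 ∧ C.Tr v p.1 p.2}

section FunctionalBisim

variable {V₁ V₂ : Type} {C₁ : Chart V₁ A} {C₂ : Chart V₂ A} {φ : V₁ → V₂}
  (hforth : ∀ (u : V₁) (a : A) (u' : V₁), C₁.Tr u a u' → C₂.Tr (φ u) a (φ u'))
  (hback : ∀ (u : V₁) (a : A) (w' : V₂), C₂.Tr (φ u) a w' →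
    ∃ u' : V₁, C₁.Tr u a u' ∧ φ u' = w')
  (hterm : ∀ u : V₁, C₁.term u ↔ C₂.term (φ u))

include hforth hback hterm

theorem exists_term_tr_iff_of_functional (v : V₁) (a : A) :
    (∃ w, C₁.term w ∧ C₁.Tr v a w) ↔ ∃ w, C₂.term w ∧ C₂.Tr (φ v) a w := by
  constructor
  · rintro ⟨w, hw, hvw⟩
    exact ⟨φ w, (hterm w).1 hw, hforth v a w hvw⟩
  · rintro ⟨w', hw', hvw'⟩
    obtain ⟨w, hvw, rfl⟩ := hback v a w' hvw'
    exact ⟨w, (hterm w).2 hw', hvw⟩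

theorem image_steps_of_functional (v : V₁) :
    Prod.map id φ '' C₁.steps v = C₂.steps (φ v) := by
  ext ⟨a, w'⟩
  constructor
  · rintro ⟨⟨a, w⟩, ⟨hw, hvw⟩, h⟩
    cases h
    exact ⟨mt (hterm w).2 hw, hforth v a w hvw⟩
  · rintro ⟨hw', hvw'⟩
    obtain ⟨w, hvw, rfl⟩ := hback v a w' hvw'
    exact ⟨(a, w), ⟨mt (hterm w).1 hw', hvw⟩, rfl⟩

theorem finite_steps_of_functional [Finite V₁] (v : V₁) (hfin : (C₂.steps (φ v)).Finite) :
    (C₁.steps v).Finite := by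
  have hfst : Prod.fst '' C₁.steps v = Prod.fst '' C₂.steps (φ v) := by
    rw [← image_steps_of_functional hforth hback hterm v, Set.image_image]
    rfl
  refine Set.Finite.subset (Set.Finite.prod ?_ (Set.toFinite _)) Set.subset_prod
  rw [hfst]
  exact hfin.image _

end FunctionalBisim

end Chart

open Chart in
theorem IsSolution.comp_of_functional {V₁ V₂ A : Type} [Finite V₁]
    {C₁ : Chart V₁ A} {C₂ : Chart V₂ A} {φ : V₁ → V₂}
    (hforth : ∀ (u : V₁) (a : A) (u' : V₁), C₁.Tr u a u' → C₂.Tr (φ u) a (φ u'))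
    (hback : ∀ (u : V₁) (a : A) (w' : V₂), C₂.Tr (φ u) a w' →
      ∃ u' : V₁, C₁.Tr u a u' ∧ φ u' = w')
    (hterm : ∀ u : V₁, C₁.term u ↔ C₂.term (φ u))
    {s₂ : V₂ → StarExp A} (hs₂ : IsSolution C₂ s₂) :
    IsSolution C₁ (s₂ ∘ φ) := by
  intro v hv
  obtain ⟨as, bs, has, hbs, heq⟩ := hs₂ (φ v) (mt (hterm v).2 hv)
  have hfin : (C₁.steps v).Finite :=
    finite_steps_of_functional hforth hback hterm v (bs.finite_toSet.subset fun q hq => (hbs q).2 hq)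
  have hbs' : ∀ p, p ∈ hfin.toFinset.toList ↔ p ∈ C₁.steps v := by simp
  refine ⟨as, hfin.toFinset.toList, fun a => (has a).trans
    (exists_term_tr_iff_of_functional hforth hback hterm v a).symm, hbs',
    heq.trans (.sum_congr (.refl _) (BBP.sumList_congr fun e => ?_))⟩
  have hsteps : ∀ q, q ∈ bs ↔ q ∈ Prod.map id φ '' C₁.steps v := by
    rw [image_steps_of_functional hforth hback hterm v]
    exact hbs
  simp only [List.mem_map, hsteps, Set.mem_image, hbs']
  constructor
  · rintro ⟨_, ⟨p, hp, rfl⟩, rfl⟩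
    exact ⟨p, hp, rfl⟩
  · rintro ⟨p, hp, rfl⟩
    exact ⟨_, ⟨p, hp, rfl⟩, rfl⟩

theorem solution_pullback_general {V1 V2 A : Type} [Finite V1]
    (C1 : Chart V1 A) (C2 : Chart V2 A) (φ : V1 → V2)
    (hstart : φ C1.start = C2.start)
    (hforth : ∀ (u : V1) (a : A) (u' : V1), C1.Tr u a u' → C2.Tr (φ u) a (φ u'))
    (hback : ∀ (u : V1) (a : A) (w' : V2), C2.Tr (φ u) a w' →
      ∃ u' : V1, C1.Tr u a u' ∧ φ u' = w')
    (hterm : ∀ u : V1, C1.term u ↔ C2.term (φ u))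
    (s2 : V2 → StarExp A) (hs2 : IsSolution C2 s2) :
    IsSolution C1 (fun u => s2 (φ u)) ∧ s2 (φ C1.start) = s2 C2.start :=
  ⟨hs2.comp_of_functional hforth hback hterm, congrArg s2 hstart⟩

/-- If `φ` is a functional bisimulation from the chart `C1` to the chart `C2`
(mapping the start vertex to the start vertex and √ to √) and `s2` is a provable
solution of `C2`, then `s2 ∘ φ` is a provable solution of `C1` with the same
principal value as `s2`. -/
theorem solution_pullback {V1 V2 A : Type} [Finite V1] [Finite V2]
    (C1 : Chart V1 A) (C2 : Chart V2 A) (φ : V1 → V2)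
    (hstart : φ C1.start = C2.start)
    (hforth : ∀ (u : V1) (a : A) (u' : V1), C1.Tr u a u' → C2.Tr (φ u) a (φ u'))
    (hback : ∀ (u : V1) (a : A) (w' : V2), C2.Tr (φ u) a w' →
      ∃ u' : V1, C1.Tr u a u' ∧ φ u' = w')
    (hterm : ∀ u : V1, C1.term u ↔ C2.term (φ u))
    (s2 : V2 → StarExp A) (hs2 : IsSolution C2 s2) :
    IsSolution C1 (fun u => s2 (φ u)) ∧ s2 (φ C1.start) = s2 C2.start :=
  solution_pullback_general C1 C2 φ hstart hforth hback hterm s2 hs2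
end
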